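/- arXiv:1707.07111 — 2 statements merged into one kernel-verified Lean document; each statement's English description precedes it below -/
import Mathlib

section
/- The function η₂(z) = (4/3) ln(1 + |z|²) · (1 − |z|²)/(1 + |z|²) + 8/(3(1 + |z|²)) satisfies Δη₂ + 8/(1+|z|²)² · η₂ = 16 Y₀(z)/(1+|z|²)² at every point of ℝ², where Y₀(z) = (1 − |z|²)/(1 + |z|²). -/
/-- The standard Laplacian on `ℝ²`. -/
noncomputable def lap (f : ℝ × ℝ → ℝ) (z : ℝ × ℝ) : ℝ :=
  deriv (deriv (fun x => f (x, z.2))) z.1 + deriv (deriv (fun y => f (z.1, y))) z.2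

/-- `Y₀(z) = (1 − |z|²)/(1 + |z|²)`. -/
noncomputable def Y0 (z : ℝ × ℝ) : ℝ :=
  (1 - (z.1 ^ 2 + z.2 ^ 2)) / (1 + (z.1 ^ 2 + z.2 ^ 2))

/-- `η₂(z) = (4/3) ln(1+|z|²) (1−|z|²)/(1+|z|²) + 8/(3(1+|z|²))`. -/
noncomputable def eta2 (z : ℝ × ℝ) : ℝ :=
  4 / 3 * Real.log (1 + (z.1 ^ 2 + z.2 ^ 2)) *
      ((1 - (z.1 ^ 2 + z.2 ^ 2)) / (1 + (z.1 ^ 2 + z.2 ^ 2)))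
    + 8 / (3 * (1 + (z.1 ^ 2 + z.2 ^ 2)))


/-!
`η₂` is radial, `η₂(z) = φ(|z|²)`, and for a radial function `Δ (φ ∘ |·|²) = 4 s φ''(s) + 4 φ'(s)`
at `s = |z|²`. The equation thus reduces to a second-order ODE for the profile `φ`, which is
checked by differentiating `φ` twice and clearing the denominators `1 + s`.
-/

open Real

section RadialLaplacian

variable {φ φ' φ'' : ℝ → ℝ}

theorem HasDerivAt.comp_sq_add {c t : ℝ} (h : HasDerivAt φ (φ' (t ^ 2 + c)) (t ^ 2 + c)) :
    HasDerivAt (fun t => φ (t ^ 2 + c)) (2 * t * φ' (t ^ 2 + c)) t := by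
  have hsq : HasDerivAt (fun t : ℝ => t ^ 2 + c) (2 * t) t := by
    simpa using (hasDerivAt_pow 2 t).add_const c
  exact (h.comp t hsq).congr_deriv (by ring)

theorem deriv_deriv_comp_sq_add (hφ : ∀ s, 0 ≤ s → HasDerivAt φ (φ' s) s)
    (hφ' : ∀ s, 0 ≤ s → HasDerivAt φ' (φ'' s) s) {c : ℝ} (hc : 0 ≤ c) (t : ℝ) :
    deriv (deriv fun t => φ (t ^ 2 + c)) t
      = 4 * t ^ 2 * φ'' (t ^ 2 + c) + 2 * φ' (t ^ 2 + c) := by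
  have hpos : ∀ t : ℝ, 0 ≤ t ^ 2 + c := fun t => by positivity
  have hfirst : deriv (fun t => φ (t ^ 2 + c)) = fun t => 2 * t * φ' (t ^ 2 + c) :=
    funext fun t => ((hφ _ (hpos t)).comp_sq_add).deriv
  have hsecond : HasDerivAt (fun t => 2 * t * φ' (t ^ 2 + c))
      (4 * t ^ 2 * φ'' (t ^ 2 + c) + 2 * φ' (t ^ 2 + c)) t :=
    (((hasDerivAt_id t).const_mul 2).mul (hφ' _ (hpos t)).comp_sq_add).congr_deriv
      (by simp only [mul_one, id_eq]; ring)
  rw [hfirst, hsecond.deriv]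

theorem lap_comp_normSq (hφ : ∀ s, 0 ≤ s → HasDerivAt φ (φ' s) s)
    (hφ' : ∀ s, 0 ≤ s → HasDerivAt φ' (φ'' s) s) (z : ℝ × ℝ) :
    lap (fun z => φ (z.1 ^ 2 + z.2 ^ 2)) z
      = 4 * (z.1 ^ 2 + z.2 ^ 2) * φ'' (z.1 ^ 2 + z.2 ^ 2) + 4 * φ' (z.1 ^ 2 + z.2 ^ 2) := by
  obtain ⟨x, y⟩ := z
  have hswap : (fun t => φ (x ^ 2 + t ^ 2)) = fun t => φ (t ^ 2 + x ^ 2) :=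
    funext fun t => by rw [add_comm]
  simp only [lap]
  rw [hswap, deriv_deriv_comp_sq_add hφ hφ' (sq_nonneg y),
    deriv_deriv_comp_sq_add hφ hφ' (sq_nonneg x), add_comm (y ^ 2) (x ^ 2)]
  ring

end RadialLaplacian

noncomputable def eta2Profile (s : ℝ) : ℝ :=
  4 / 3 * log (1 + s) * ((1 - s) / (1 + s)) + 8 / (3 * (1 + s))

noncomputable def eta2Profile' (s : ℝ) : ℝ :=
  -(4 / 3) * (1 / (1 + s) + 2 * log (1 + s) / (1 + s) ^ 2)

noncomputable def eta2Profile'' (s : ℝ) : ℝ :=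
  4 / 3 * (1 / (1 + s) ^ 2 - 2 / (1 + s) ^ 3 + 4 * log (1 + s) / (1 + s) ^ 3)

theorem hasDerivAt_eta2Profile {s : ℝ} (hs : -1 < s) :
    HasDerivAt eta2Profile (eta2Profile' s) s := by
  have hu : HasDerivAt (fun s : ℝ => 1 + s) 1 s := (hasDerivAt_id s).const_add 1
  have hne : 1 + s ≠ 0 := by linarith
  have h : HasDerivAt eta2Profile _ s :=
    (((hu.log hne).const_mul (4 / 3)).mul (((hasDerivAt_id s).const_sub 1).div hu hne)).add
      ((hasDerivAt_const s 8).div (hu.const_mul 3) (by positivity))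
  refine h.congr_deriv ?_
  simp only [eta2Profile', Pi.div_apply, id]
  field_simp
  ring

theorem hasDerivAt_eta2Profile' {s : ℝ} (hs : -1 < s) :
    HasDerivAt eta2Profile' (eta2Profile'' s) s := by
  have hu : HasDerivAt (fun s : ℝ => 1 + s) 1 s := (hasDerivAt_id s).const_add 1
  have hne : 1 + s ≠ 0 := by linarith
  have h : HasDerivAt eta2Profile' _ s := (((hasDerivAt_const s 1).div hu hne).add
    (((hu.log hne).const_mul 2).div (hu.pow 2) (pow_ne_zero 2 hne))).const_mul (-(4 / 3))
  refine h.congr_deriv ?_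
  simp only [eta2Profile'', Pi.pow_apply]
  field_simp
  ring

theorem eta2Profile_ode {s : ℝ} (hs : -1 < s) :
    4 * s * eta2Profile'' s + 4 * eta2Profile' s + 8 / (1 + s) ^ 2 * eta2Profile s
      = 16 * ((1 - s) / (1 + s)) / (1 + s) ^ 2 := by
  have hne : 1 + s ≠ 0 := by linarith
  simp only [eta2Profile, eta2Profile', eta2Profile'']
  field_simp
  ring

theorem eta2_equation :
    ∀ z : ℝ × ℝ,
      lap eta2 z + 8 / (1 + (z.1 ^ 2 + z.2 ^ 2)) ^ 2 * eta2 z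
        = 16 * Y0 z / (1 + (z.1 ^ 2 + z.2 ^ 2)) ^ 2 := by
  intro z
  have hs : -1 < z.1 ^ 2 + z.2 ^ 2 := by linarith [sq_nonneg z.1, sq_nonneg z.2]
  have hlap : lap eta2 z = _ :=
    lap_comp_normSq (φ := eta2Profile) (fun _ h => hasDerivAt_eta2Profile (by linarith))
      (fun _ h => hasDerivAt_eta2Profile' (by linarith)) z
  rw [hlap]
  exact eta2Profile_ode hs
end

section
/- Let Ω ⊆ ℝ² be open and let f, g : Ω → ℝ be twice continuously differentiable. Then at every point z ∈ Ω the following pointwise identity holds: (Δ(f − g)) (∇(f + g) · z) + (Δ(f + g)) (∇(f − g) · z) = div{ (∇(f − g)) (∇(f + g) · z) + (∇(f + g)) (∇(f − g) · z) − (∇(f − g) · ∇(f + g)) z }. -/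
/-- Partial derivative in the first coordinate direction. -/
noncomputable def pd1 (f : ℝ × ℝ → ℝ) (z : ℝ × ℝ) : ℝ :=
  deriv (fun x => f (x, z.2)) z.1

/-- Partial derivative in the second coordinate direction. -/
noncomputable def pd2 (f : ℝ × ℝ → ℝ) (z : ℝ × ℝ) : ℝ :=
  deriv (fun y => f (z.1, y)) z.2

/-- Gradient of a scalar function on `ℝ²`. -/
noncomputable def grad (f : ℝ × ℝ → ℝ) (z : ℝ × ℝ) : ℝ × ℝ :=
  (pd1 f z, pd2 f z)

/-- Divergence of a vector field on `ℝ²`. -/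
noncomputable def divg (F : ℝ × ℝ → ℝ × ℝ) (z : ℝ × ℝ) : ℝ :=
  pd1 (fun w => (F w).1) z + pd2 (fun w => (F w).2) z

/-- Euclidean inner product on `ℝ²`. -/
def dot (p q : ℝ × ℝ) : ℝ := p.1 * q.1 + p.2 * q.2

/-!
Writing `u = f - g`, `v = f + g`, the product rule `div (φ G) = ∇φ · G + φ div G` together with
`div (∇u) = Δu` and `div z = 2` reduces the identity to
`∇(∇v · z) · ∇u + ∇(∇u · z) · ∇v = ∇(∇u · ∇v) · z + 2 ∇u · ∇v`.
Both sides expand to `D²v(∇u, z) + D²u(∇v, z) + 2 ∇u · ∇v`, once the Hessians are known to be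
symmetric.
-/

open Topology ContinuousLinearMap

section Calculus

variable {u φ : ℝ × ℝ → ℝ} {F G : ℝ × ℝ → ℝ × ℝ} {z : ℝ × ℝ}

theorem dot_apply_basis (L : ℝ × ℝ →L[ℝ] ℝ) (p : ℝ × ℝ) :
    dot (L (1, 0), L (0, 1)) p = L p := by
  have hp : p = p.1 • ((1 : ℝ), (0 : ℝ)) + p.2 • ((0 : ℝ), (1 : ℝ)) := by ext <;> simp
  conv_rhs => rw [hp]
  simp only [map_add, map_smul, smul_eq_mul, dot]
  ring

theorem pd1_eq_fderiv (hu : DifferentiableAt ℝ u z) : pd1 u z = fderiv ℝ u z (1, 0) :=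
  (hu.hasFDerivAt.comp_hasDerivAt z.1
    ((hasDerivAt_id' z.1).prodMk (hasDerivAt_const z.1 z.2))).deriv

theorem pd2_eq_fderiv (hu : DifferentiableAt ℝ u z) : pd2 u z = fderiv ℝ u z (0, 1) :=
  (hu.hasFDerivAt.comp_hasDerivAt z.2
    ((hasDerivAt_const z.2 z.1).prodMk (hasDerivAt_id' z.2))).deriv

theorem dot_grad_eq_fderiv (hu : DifferentiableAt ℝ u z) (p : ℝ × ℝ) :
    dot (grad u z) p = fderiv ℝ u z p := by
  rw [grad, pd1_eq_fderiv hu, pd2_eq_fderiv hu, dot_apply_basis]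

theorem divg_eq_fderiv (hF : DifferentiableAt ℝ F z) :
    divg F z = (fderiv ℝ F z (1, 0)).1 + (fderiv ℝ F z (0, 1)).2 := by
  rw [divg, pd1_eq_fderiv hF.fst, pd2_eq_fderiv hF.snd, hF.hasFDerivAt.fst.fderiv,
    hF.hasFDerivAt.snd.fderiv]
  rfl

theorem lap_eq_divg_grad : lap u z = divg (grad u) z := rfl

theorem divg_id : divg (fun w => w) z = 2 := by
  rw [divg_eq_fderiv differentiableAt_fun_id, fderiv_fun_id]
  norm_num

theorem divg_add (hF : DifferentiableAt ℝ F z) (hG : DifferentiableAt ℝ G z) :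
    divg (fun w => F w + G w) z = divg F z + divg G z := by
  rw [divg_eq_fderiv (hF.fun_add hG), fderiv_fun_add hF hG, divg_eq_fderiv hF, divg_eq_fderiv hG]
  simp only [add_apply, Prod.fst_add, Prod.snd_add]
  ring

theorem divg_sub (hF : DifferentiableAt ℝ F z) (hG : DifferentiableAt ℝ G z) :
    divg (fun w => F w - G w) z = divg F z - divg G z := by
  rw [divg_eq_fderiv (hF.fun_sub hG), fderiv_fun_sub hF hG, divg_eq_fderiv hF, divg_eq_fderiv hG]
  simp only [sub_apply, Prod.fst_sub, Prod.snd_sub]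
  ring

theorem divg_smul (hφ : DifferentiableAt ℝ φ z) (hG : DifferentiableAt ℝ G z) :
    divg (fun w => φ w • G w) z = dot (grad φ z) (G z) + φ z * divg G z := by
  rw [divg_eq_fderiv (hφ.fun_smul hG), fderiv_fun_smul hφ hG, divg_eq_fderiv hG, grad,
    pd1_eq_fderiv hφ, pd2_eq_fderiv hφ]
  simp only [add_apply, smul_apply, smulRight_apply, Prod.fst_add, Prod.snd_add,
    Prod.smul_fst, Prod.smul_snd, smul_eq_mul, dot]
  ring

theorem DifferentiableAt.dot (hF : DifferentiableAt ℝ F z) (hG : DifferentiableAt ℝ G z) :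
    DifferentiableAt ℝ (fun w => dot (F w) (G w)) z := by
  unfold _root_.dot
  fun_prop

theorem fderiv_dot_apply (hF : DifferentiableAt ℝ F z) (hG : DifferentiableAt ℝ G z)
    (p : ℝ × ℝ) :
    fderiv ℝ (fun w => dot (F w) (G w)) z p =
      dot (fderiv ℝ F z p) (G z) + dot (F z) (fderiv ℝ G z p) := by
  have hFG := (hF.hasFDerivAt.fst.fun_mul hG.hasFDerivAt.fst).fun_add
    (hF.hasFDerivAt.snd.fun_mul hG.hasFDerivAt.snd)
  unfold _root_.dot
  rw [hFG.fderiv]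
  simp only [add_apply, smul_apply, comp_apply, coe_fst', coe_snd', smul_eq_mul]
  ring

end Calculus

section SecondOrder

variable {u : ℝ × ℝ → ℝ} {z : ℝ × ℝ}

theorem grad_eventuallyEq_fderiv (hu : ContDiffAt ℝ 1 u z) :
    grad u =ᶠ[𝓝 z] fun w => (fderiv ℝ u w (1, 0), fderiv ℝ u w (0, 1)) := by
  filter_upwards [hu.eventually (by simp)] with w hw
  have hd := hw.differentiableAt one_ne_zero
  rw [grad, pd1_eq_fderiv hd, pd2_eq_fderiv hd]

theorem hasFDerivAt_grad (hu : ContDiffAt ℝ 2 u z) :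
    HasFDerivAt (grad u)
      (((apply ℝ ℝ (1, 0)).comp (fderiv ℝ (fderiv ℝ u) z)).prod
        ((apply ℝ ℝ (0, 1)).comp (fderiv ℝ (fderiv ℝ u) z))) z := by
  have hD : HasFDerivAt (fderiv ℝ u) (fderiv ℝ (fderiv ℝ u) z) z :=
    ((hu.fderiv_right (m := 1) one_add_one_eq_two.le).differentiableAt one_ne_zero).hasFDerivAt
  refine .congr_of_eventuallyEq ?_ (grad_eventuallyEq_fderiv (hu.of_le one_le_two))
  exact ((apply ℝ ℝ (1, 0)).hasFDerivAt.comp z hD).prodMk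
    ((apply ℝ ℝ (0, 1)).hasFDerivAt.comp z hD)

theorem differentiableAt_grad (hu : ContDiffAt ℝ 2 u z) : DifferentiableAt ℝ (grad u) z :=
  (hasFDerivAt_grad hu).differentiableAt

theorem dot_fderiv_grad_apply (hu : ContDiffAt ℝ 2 u z) (p q : ℝ × ℝ) :
    dot (fderiv ℝ (grad u) z p) q = fderiv ℝ (fderiv ℝ u) z p q := by
  rw [(hasFDerivAt_grad hu).fderiv]
  exact dot_apply_basis _ q

theorem dot_fderiv_grad_comm (hu : ContDiffAt ℝ 2 u z) (p q : ℝ × ℝ) :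
    dot (fderiv ℝ (grad u) z p) q = dot (fderiv ℝ (grad u) z q) p := by
  rw [dot_fderiv_grad_apply hu, dot_fderiv_grad_apply hu, hu.isSymmSndFDerivAt (by simp)]

end SecondOrder

noncomputable def pohozaevField (u v : ℝ × ℝ → ℝ) (w : ℝ × ℝ) : ℝ × ℝ :=
  dot (grad v w) w • grad u w + dot (grad u w) w • grad v w - dot (grad u w) (grad v w) • w

theorem divg_pohozaevField {u v : ℝ × ℝ → ℝ} {z : ℝ × ℝ} (hu : ContDiffAt ℝ 2 u z)
    (hv : ContDiffAt ℝ 2 v z) :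
    divg (pohozaevField u v) z = lap u z * dot (grad v z) z + lap v z * dot (grad u z) z := by
  have hgu := differentiableAt_grad hu
  have hgv := differentiableAt_grad hv
  have hid : DifferentiableAt ℝ (fun w : ℝ × ℝ => w) z := differentiableAt_fun_id
  have hφu := hgu.dot hid
  have hφv := hgv.dot hid
  have hψ := hgu.dot hgv
  unfold pohozaevField
  rw [divg_sub ((hφv.fun_smul hgu).fun_add (hφu.fun_smul hgv)) (hψ.fun_smul hid),
    divg_add (hφv.fun_smul hgu) (hφu.fun_smul hgv), divg_smul hφv hgu, divg_smul hφu hgv,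
    divg_smul hψ hid, divg_id, ← lap_eq_divg_grad, ← lap_eq_divg_grad,
    dot_grad_eq_fderiv hφv, dot_grad_eq_fderiv hφu, dot_grad_eq_fderiv hψ,
    fderiv_dot_apply hgv hid, fderiv_dot_apply hgu hid, fderiv_dot_apply hgu hgv, fderiv_fun_id,
    dot_fderiv_grad_comm hv (grad u z) z, dot_fderiv_grad_comm hu (grad v z) z]
  simp only [coe_id', id_eq, dot]
  ring

theorem pohozaev_divergence_identity
    (Ω : Set (ℝ × ℝ)) (hΩ : IsOpen Ω)
    (f g : ℝ × ℝ → ℝ)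
    (hf : ContDiffOn ℝ 2 f Ω) (hg : ContDiffOn ℝ 2 g Ω) :
    ∀ z ∈ Ω,
      lap (fun w => f w - g w) z * dot (grad (fun w => f w + g w) z) z
        + lap (fun w => f w + g w) z * dot (grad (fun w => f w - g w) z) z
      = divg (fun w =>
          dot (grad (fun w' => f w' + g w') w) w • grad (fun w' => f w' - g w') w
          + dot (grad (fun w' => f w' - g w') w) w • grad (fun w' => f w' + g w') w
          - dot (grad (fun w' => f w' - g w') w) (grad (fun w' => f w' + g w') w) • w) z := by
  intro z hz
  have hzΩ := hΩ.mem_nhds hz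
  exact (divg_pohozaevField ((hf.contDiffAt hzΩ).sub (hg.contDiffAt hzΩ))
    ((hf.contDiffAt hzΩ).add (hg.contDiffAt hzΩ))).symm
end
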